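/- arXiv:0808.2803 — 4 statements merged into one kernel-verified Lean document; each statement's English description precedes it below -/
import Mathlib

section
/- In ZF without choice: every uncountable G_δσ subset of the real line either is countable or contains a nonempty perfect subset. -/
open Set Filter Topology

/-- Points of Cantor space are not isolated. -/
lemma cantor_tendsto (a : ℕ → Bool) :
    ∃ u : ℕ → (ℕ → Bool), (∀ n, u n ≠ a) ∧ Filter.Tendsto u atTop (𝓝 a) := by
  refine ⟨fun n => Function.update a n (!a n), fun n => ?_, ?_⟩
  · intro h
    have := congrFun h n
    simp [Function.update_self] at this
  · rw [tendsto_pi_nhds]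
    intro i
    apply Filter.Tendsto.congr' (f₁ := fun _ => a i)
    · filter_upwards [Filter.eventually_gt_atTop i] with n hn
      simp [Function.update_of_ne (by omega : i ≠ n)]
    · exact tendsto_const_nhds

/-- The range of a continuous injection from Cantor space into ℝ is perfect. -/
lemma perfect_range_of_cantor {f : (ℕ → Bool) → ℝ} (hf : Continuous f)
    (hinj : Function.Injective f) : Perfect (Set.range f) := by
  constructor
  · exact (isCompact_range hf).isClosed
  · rintro x ⟨a, rfl⟩
    rw [accPt_iff_nhds]
    intro U hU
    obtain ⟨u, hu_ne, hu_tend⟩ := cantor_tendsto a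
    have : Filter.Tendsto (f ∘ u) atTop (𝓝 (f a)) := (hf.tendsto a).comp hu_tend
    have hev : ∀ᶠ n in atTop, f (u n) ∈ U := this hU
    obtain ⟨n, hn⟩ := hev.exists
    exact ⟨f (u n), ⟨hn, ⟨u n, rfl⟩⟩, fun h => hu_ne n (hinj h)⟩

/-- An uncountable Gδ subset of ℝ contains a nonempty perfect subset. -/
lemma gdelta_perfect (G : Set ℝ) (hG : MeasurableSet G) (hunc : ¬G.Countable) :
    ∃ P : Set ℝ, P ⊆ G ∧ P.Nonempty ∧ Perfect P := by
  obtain ⟨t', ht'le, ht'polish, ht'closed, -⟩ := hG.isClopenable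
  obtain ⟨f, hfran, hfcont, hfinj⟩ :=
    @IsClosed.exists_nat_bool_injection_of_not_countable ℝ t' ht'polish G ht'closed hunc
  refine ⟨Set.range f, hfran, Set.range_nonempty f,
    perfect_range_of_cantor ?_ hfinj⟩
  exact continuous_le_rng ht'le hfcont

/-- A set is `G_δσ` if it is a countable union of countable intersections of open sets. -/
def IsGdeltaSigma {X : Type} [TopologicalSpace X] (B : Set X) : Prop :=
  ∃ F : ℕ → ℕ → Set X, (∀ n m, IsOpen (F n m)) ∧ B = ⋃ n, ⋂ m, F n m

/-- Every `G_δσ` subset of the real line is either countable or contains a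
nonempty perfect subset. -/
theorem gdeltaSigma_countable_or_perfect_subset (B : Set ℝ) (hB : IsGdeltaSigma B) :
    B.Countable ∨ ∃ P : Set ℝ, P ⊆ B ∧ P.Nonempty ∧ Perfect P := by
  obtain ⟨F, hFopen, rfl⟩ := hB
  by_cases hc : ∀ n, (⋂ m, F n m).Countable
  · exact Or.inl (Set.countable_iUnion hc)
  · push_neg at hc
    obtain ⟨n, hn⟩ := hc
    have hmeas : MeasurableSet (⋂ m, F n m) :=
      MeasurableSet.iInter fun m => (hFopen n m).measurableSet
    obtain ⟨P, hPsub, hPne, hPperf⟩ := gdelta_perfect _ hmeas hn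
    exact Or.inr ⟨P, hPsub.trans (Set.subset_iUnion (fun n => ⋂ m, F n m) n), hPne, hPperf⟩
end

section
/- The distinguishing number of the random graph (Rado graph) is 2. -/
/-- A coloring `c` of the vertices with `r` labels is distinguishing for the graph `G`
if the only automorphism of `G` preserving the labels is the identity. -/
def SimpleGraph.IsDistinguishing {V : Type} (G : SimpleGraph V) (r : ℕ) (c : V → Fin r) : Prop :=
  ∀ φ : G ≃g G, (∀ v, c (φ v) = c v) → ∀ v, φ v = v

/-- The distinguishing number of a graph: the least `r` admitting a distinguishing
labeling with `r` labels. -/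
noncomputable def SimpleGraph.distinguishingNumber {V : Type} (G : SimpleGraph V) : ℕ :=
  sInf {r : ℕ | ∃ c : V → Fin r, G.IsDistinguishing r c}

/-- `G` is the Rado (random) graph: a countably infinite graph with the extension
property. -/
def IsRadoGraph {V : Type} (G : SimpleGraph V) : Prop :=
  Countable V ∧ Infinite V ∧
    ∀ A B : Finset V, Disjoint A B →
      ∃ v, v ∉ A ∧ v ∉ B ∧ (∀ a ∈ A, G.Adj v a) ∧ ∀ b ∈ B, ¬ G.Adj v b

/-! Label the vertices of an induced ray `v₀ v₁ v₂ …` by `1` and all other vertices by `0`. The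
extension property lets us build the ray so that any two vertices off the ray are told apart by
some ray vertex adjacent to exactly one of them. A label-preserving automorphism maps the ray onto
itself, hence fixes it pointwise since a one-way infinite path is rigid, and then it fixes every
other vertex too, which is determined by its neighbours on the ray. One label is not enough because
a back-and-forth argument makes the Rado graph vertex-transitive. -/

namespace SimpleGraph

variable {V W : Type*} {G : SimpleGraph V} {H : SimpleGraph W}

variable (G) in
def HasExtensionProperty : Prop :=
  ∀ A B : Finset V, Disjoint A B →
    ∃ v, v ∉ A ∧ v ∉ B ∧ (∀ a ∈ A, G.Adj v a) ∧ ∀ b ∈ B, ¬ G.Adj v b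

section BackAndForth

variable (G H) in
/-- `s` is the graph of an isomorphism between the subgraphs induced on its two projections. -/
def IsPartialIso (s : Set (V × W)) : Prop :=
  ∀ p ∈ s, ∀ q ∈ s, (p.1 = q.1 ↔ p.2 = q.2) ∧ (G.Adj p.1 q.1 ↔ H.Adj p.2 q.2)

theorem IsPartialIso.swap {s : Set (V × W)} (hs : IsPartialIso G H s) :
    IsPartialIso H G (Prod.swap '' s) := by
  rintro _ ⟨p, hp, rfl⟩ _ ⟨q, hq, rfl⟩
  exact ⟨(hs p hp q hq).1.symm, (hs p hp q hq).2.symm⟩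

theorem IsPartialIso.insert {s : Set (V × W)} (hs : IsPartialIso G H s) {a : V} {b : W}
    (hab : ∀ p ∈ s, (p.1 = a ↔ p.2 = b) ∧ (G.Adj p.1 a ↔ H.Adj p.2 b)) :
    IsPartialIso G H (insert (a, b) s) := by
  have hba : ∀ p ∈ s, (a = p.1 ↔ b = p.2) ∧ (G.Adj a p.1 ↔ H.Adj b p.2) := fun p hp ↦
    ⟨by rw [eq_comm, (hab p hp).1, eq_comm], by rw [G.adj_comm, (hab p hp).2, H.adj_comm]⟩
  rintro p (rfl | hp) q (rfl | hq)
  exacts [⟨by simp, by simp⟩, hba q hq, hab p hp, hs p hp q hq]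

theorem IsPartialIso.exists_iso {s : Set (V × W)} (hs : IsPartialIso G H s)
    (hdom : ∀ a, ∃ b, (a, b) ∈ s) (hcod : ∀ b, ∃ a, (a, b) ∈ s) :
    ∃ φ : G ≃g H, ∀ p ∈ s, φ p.1 = p.2 := by
  choose φ hφ using hdom
  choose ψ hψ using hcod
  refine ⟨⟨⟨φ, ψ, fun a ↦ ?_, fun b ↦ ?_⟩, fun {a a'} ↦ ?_⟩, fun p hp ↦ ?_⟩
  · exact ((hs _ (hψ (φ a)) _ (hφ a)).1.mpr rfl)
  · exact ((hs _ (hφ (ψ b)) _ (hψ b)).1.mp rfl)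
  · exact (hs _ (hφ a) _ (hφ a')).2.symm
  · exact (hs _ (hφ p.1) _ hp).1.mp rfl

theorem HasExtensionProperty.exists_partner_left (hH : H.HasExtensionProperty)
    {f : Finset (V × W)} (hf : IsPartialIso G H f) (a : V) :
    ∃ b, ∀ p ∈ f, (p.1 = a ↔ p.2 = b) ∧ (G.Adj p.1 a ↔ H.Adj p.2 b) := by
  classical
  by_cases hdom : ∃ b, (a, b) ∈ f
  · obtain ⟨b, hb⟩ := hdom
    exact ⟨b, fun p hp ↦ hf p hp _ hb⟩
  push Not at hdom
  have hdisj : Disjoint ({p ∈ f | G.Adj p.1 a}.image Prod.snd)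
      ({p ∈ f | ¬ G.Adj p.1 a}.image Prod.snd) := by
    simp only [Finset.disjoint_left, Finset.mem_image, Finset.mem_filter]
    rintro _ ⟨p, ⟨hp, hpa⟩, rfl⟩ ⟨q, ⟨hq, hqa⟩, hqp⟩
    exact hqa ((hf q hq p hp).1.mpr hqp ▸ hpa)
  obtain ⟨b, -, hbB, hadj, hnadj⟩ := hH _ _ hdisj
  refine ⟨b, fun p hp ↦ ?_⟩
  have hpa : p.1 ≠ a := fun h ↦ hdom p.2 (h ▸ hp)
  by_cases hpa' : G.Adj p.1 a
  · have hpb := hadj p.2 (Finset.mem_image_of_mem _ (Finset.mem_filter.mpr ⟨hp, hpa'⟩))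
    exact ⟨iff_of_false hpa hpb.ne', iff_of_true hpa' hpb.symm⟩
  · have hpB := Finset.mem_image_of_mem Prod.snd
      (Finset.mem_filter.mpr ⟨hp, hpa'⟩ : p ∈ {p ∈ f | ¬ G.Adj p.1 a})
    exact ⟨iff_of_false hpa fun h ↦ hbB (h ▸ hpB),
      iff_of_false hpa' fun h ↦ hnadj _ hpB h.symm⟩

theorem HasExtensionProperty.exists_partner_right (hG : G.HasExtensionProperty)
    {f : Finset (V × W)} (hf : IsPartialIso G H f) (b : W) :
    ∃ a, ∀ p ∈ f, (p.1 = a ↔ p.2 = b) ∧ (G.Adj p.1 a ↔ H.Adj p.2 b) := by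
  classical
  obtain ⟨a, ha⟩ := hG.exists_partner_left (f := f.image Prod.swap)
    (by simpa only [Finset.coe_image] using hf.swap) b
  refine ⟨a, fun p hp ↦ ?_⟩
  simpa only [Prod.fst_swap, Prod.snd_swap, Iff.comm] using
    ha p.swap (Finset.mem_image_of_mem _ hp)

variable (G H) in
abbrev FinPartialIso := {f : Finset (V × W) // IsPartialIso G H f}

def FinPartialIso.definedAtLeft (hH : H.HasExtensionProperty) (a : V) :
    Order.Cofinal (FinPartialIso G H) where
  carrier := {f | ∃ b, (a, b) ∈ f.1}
  isCofinal f := by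
    classical
    obtain ⟨b, hb⟩ := hH.exists_partner_left f.2 a
    exact ⟨⟨insert (a, b) f.1, by simpa only [Finset.coe_insert] using f.2.insert hb⟩,
      ⟨b, Finset.mem_insert_self _ _⟩, Finset.subset_insert _ _⟩

def FinPartialIso.definedAtRight (hG : G.HasExtensionProperty) (b : W) :
    Order.Cofinal (FinPartialIso G H) where
  carrier := {f | ∃ a, (a, b) ∈ f.1}
  isCofinal f := by
    classical
    obtain ⟨a, ha⟩ := hG.exists_partner_right f.2 b
    exact ⟨⟨insert (a, b) f.1, by simpa only [Finset.coe_insert] using f.2.insert ha⟩,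
      ⟨a, Finset.mem_insert_self _ _⟩, Finset.subset_insert _ _⟩

theorem HasExtensionProperty.exists_iso_extending [Countable V] [Countable W]
    (hG : G.HasExtensionProperty) (hH : H.HasExtensionProperty) {f : Finset (V × W)}
    (hf : IsPartialIso G H f) : ∃ φ : G ≃g H, ∀ p ∈ f, φ p.1 = p.2 := by
  have := Encodable.ofCountable V
  have := Encodable.ofCountable W
  let D : V ⊕ W → Order.Cofinal (FinPartialIso G H) :=
    Sum.elim (FinPartialIso.definedAtLeft hH) (FinPartialIso.definedAtRight hG)
  let I := Order.idealOfCofinals ⟨f, hf⟩ D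
  let s : Set (V × W) := {p | ∃ g ∈ I, p ∈ g.1}
  have hs : IsPartialIso G H s := by
    rintro p ⟨g, hg, hp⟩ q ⟨g', hg', hq⟩
    obtain ⟨k, -, hgk, hg'k⟩ := I.directed g hg g' hg'
    exact k.2 p (hgk hp) q (hg'k hq)
  have hdom : ∀ a, ∃ b, (a, b) ∈ s := fun a ↦ by
    obtain ⟨g, ⟨b, hb⟩, hg⟩ := Order.cofinal_meets_idealOfCofinals ⟨f, hf⟩ D (.inl a)
    exact ⟨b, g, hg, hb⟩
  have hcod : ∀ b, ∃ a, (a, b) ∈ s := fun b ↦ by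
    obtain ⟨g, ⟨a, ha⟩, hg⟩ := Order.cofinal_meets_idealOfCofinals ⟨f, hf⟩ D (.inr b)
    exact ⟨a, g, hg, ha⟩
  obtain ⟨φ, hφ⟩ := hs.exists_iso hdom hcod
  exact ⟨φ, fun p hp ↦ hφ p ⟨_, Order.mem_idealOfCofinals _ _, hp⟩⟩

theorem HasExtensionProperty.exists_iso_apply_eq [Countable V] (hG : G.HasExtensionProperty)
    (u w : V) : ∃ φ : G ≃g G, φ u = w := by
  obtain ⟨φ, hφ⟩ := hG.exists_iso_extending hG (f := {(u, w)}) (by simp [IsPartialIso])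
  exact ⟨φ, hφ _ (Finset.mem_singleton_self _)⟩

end BackAndForth

theorem hasse_nat_adj {a b : ℕ} : (hasse ℕ).Adj a b ↔ a + 1 = b ∨ b + 1 = a := by
  rw [hasse_adj, Order.covBy_iff_add_one_eq, Order.covBy_iff_add_one_eq]

section Ray

variable [DecidableEq V] (hG : G.HasExtensionProperty)

noncomputable def HasExtensionProperty.witness (A B : Finset V) : V :=
  (hG A (B \ A) Finset.disjoint_sdiff).choose

theorem HasExtensionProperty.witness_notMem {A B : Finset V} : hG.witness A B ∉ B := by
  intro hB
  obtain ⟨hA, hBA, -⟩ := (hG A (B \ A) Finset.disjoint_sdiff).choose_spec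
  exact hBA (Finset.mem_sdiff.mpr ⟨hB, hA⟩)

theorem HasExtensionProperty.adj_witness {A B : Finset V} {a : V} (ha : a ∈ A) :
    G.Adj (hG.witness A B) a :=
  (hG A (B \ A) Finset.disjoint_sdiff).choose_spec.2.2.1 a ha

theorem HasExtensionProperty.not_adj_witness {A B : Finset V} {b : V} (hb : b ∈ B)
    (hbA : b ∉ A) : ¬ G.Adj (hG.witness A B) b :=
  (hG A (B \ A) Finset.disjoint_sdiff).choose_spec.2.2.2 b (Finset.mem_sdiff.mpr ⟨hb, hbA⟩)

/-- The second component collects the vertices built so far; `p` enumerates the pairs of vertices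
that the ray has to separate. -/
noncomputable def HasExtensionProperty.rayData (p : ℕ → V × V) (v₀ : V) : ℕ → V × Finset V
  | 0 => (v₀, {v₀})
  | n + 1 =>
    let x := (rayData p v₀ n).1
    let R := (rayData p v₀ n).2
    let y := hG.witness (insert x ({(p n).1} \ R)) (insert (p n).2 R)
    (y, insert y R)

noncomputable def HasExtensionProperty.ray (p : ℕ → V × V) (v₀ : V) (n : ℕ) : V :=
  (hG.rayData p v₀ n).1

variable {p : ℕ → V × V} {v₀ : V}

theorem HasExtensionProperty.rayData_snd (n : ℕ) :
    (hG.rayData p v₀ n).2 = (Finset.range (n + 1)).image (hG.ray p v₀) := by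
  induction n with
  | zero => rfl
  | succ n ih =>
    rw [Finset.range_add_one, Finset.image_insert, ← ih]
    rfl

theorem HasExtensionProperty.ray_succ (n : ℕ) :
    hG.ray p v₀ (n + 1) =
      hG.witness
        (insert (hG.ray p v₀ n) ({(p n).1} \ (Finset.range (n + 1)).image (hG.ray p v₀)))
        (insert (p n).2 ((Finset.range (n + 1)).image (hG.ray p v₀))) := by
  rw [← hG.rayData_snd]
  rfl

theorem HasExtensionProperty.ray_ne_of_lt {i j : ℕ} (hij : i < j) :
    hG.ray p v₀ i ≠ hG.ray p v₀ j := by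
  obtain ⟨n, rfl⟩ : ∃ n, j = n + 1 := ⟨j - 1, by omega⟩
  intro h
  have hmem := Finset.mem_image_of_mem (hG.ray p v₀) (Finset.mem_range.mpr hij)
  rw [h, hG.ray_succ] at hmem
  exact hG.witness_notMem (Finset.mem_insert_of_mem hmem)

theorem HasExtensionProperty.ray_injective : Function.Injective (hG.ray p v₀) := by
  intro i j h
  by_contra hij
  rcases Ne.lt_or_gt hij with hij | hij
  exacts [hG.ray_ne_of_lt hij h, hG.ray_ne_of_lt hij h.symm]

theorem HasExtensionProperty.adj_ray_iff_of_lt {i j : ℕ} (hij : i < j) :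
    G.Adj (hG.ray p v₀ j) (hG.ray p v₀ i) ↔ j = i + 1 := by
  obtain ⟨n, rfl⟩ : ∃ n, j = n + 1 := ⟨j - 1, by omega⟩
  rw [hG.ray_succ]
  rcases (Nat.lt_succ_iff.mp hij).lt_or_eq with hin | rfl
  · refine iff_of_false (hG.not_adj_witness ?_ ?_) (by omega)
    · exact Finset.mem_insert_of_mem (Finset.mem_image_of_mem _ (Finset.mem_range.mpr hij))
    · simp only [Finset.mem_insert, Finset.mem_sdiff, Finset.mem_image, Finset.mem_range,
        not_or, not_and, not_not]
      exact ⟨hG.ray_ne_of_lt hin, fun _ ↦ ⟨i, hij, rfl⟩⟩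
  · exact iff_of_true (hG.adj_witness (Finset.mem_insert_self _ _)) rfl

variable (p v₀) in
noncomputable def HasExtensionProperty.rayEmbedding : hasse ℕ ↪g G where
  toFun := hG.ray p v₀
  inj' := hG.ray_injective
  map_rel_iff' {i j} := by
    change G.Adj (hG.ray p v₀ i) (hG.ray p v₀ j) ↔ _
    rw [hasse_nat_adj]
    rcases lt_trichotomy i j with hij | rfl | hij
    · rw [G.adj_comm, hG.adj_ray_iff_of_lt hij]
      omega
    · simp
    · rw [hG.adj_ray_iff_of_lt hij]
      omega

theorem HasExtensionProperty.ray_separates {n : ℕ} {u w : V} (hp : p n = (u, w))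
    (hu : u ∉ Set.range (hG.ray p v₀)) (hw : w ∉ Set.range (hG.ray p v₀)) (huw : u ≠ w) :
    G.Adj (hG.ray p v₀ (n + 1)) u ∧ ¬ G.Adj (hG.ray p v₀ (n + 1)) w := by
  have hu' : u ∉ (Finset.range (n + 1)).image (hG.ray p v₀) := fun h ↦ by
    obtain ⟨m, -, rfl⟩ := Finset.mem_image.mp h
    exact hu ⟨m, rfl⟩
  rw [hG.ray_succ, hp]
  refine ⟨hG.adj_witness (Finset.mem_insert_of_mem ?_), hG.not_adj_witness
    (Finset.mem_insert_self _ _) ?_⟩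
  · exact Finset.mem_sdiff.mpr ⟨Finset.mem_singleton_self _, hu'⟩
  · simp only [Finset.mem_insert, Finset.mem_sdiff, Finset.mem_singleton, not_or, not_and]
    exact ⟨fun h ↦ hw ⟨n, h.symm⟩, fun h ↦ absurd h.symm huw⟩

end Ray

/-- `0` is the only vertex of degree one; then induct along the ray. -/
theorem hasse_nat_iso_apply (f : hasse ℕ ≃g hasse ℕ) (n : ℕ) : f n = n := by
  have h0 : f 0 = 0 := by
    by_contra h
    obtain ⟨k, hk⟩ : ∃ k, f 0 = k + 1 := ⟨f 0 - 1, by omega⟩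
    have hnbr : ∀ m, (hasse ℕ).Adj m (k + 1) → f.symm m = 1 := fun m hm ↦ by
      have := f.symm.map_adj_iff.mpr hm
      rw [← hk, f.symm_apply_apply, hasse_nat_adj] at this
      omega
    have := f.symm.injective ((hnbr k (hasse_nat_adj.mpr (by omega))).trans
      (hnbr (k + 2) (hasse_nat_adj.mpr (by omega))).symm)
    omega
  have hadj : ∀ n, (hasse ℕ).Adj (f n) (f (n + 1)) := fun n ↦
    f.map_adj_iff.mpr (hasse_nat_adj.mpr (Or.inl rfl))
  have hsucc : ∀ n, f n = n ∧ f (n + 1) = n + 1 := fun n ↦ by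
    induction n with
    | zero =>
      have := hadj 0
      rw [h0, hasse_nat_adj] at this
      exact ⟨h0, by omega⟩
    | succ n ih =>
      have := hadj (n + 1)
      rw [ih.2, hasse_nat_adj] at this
      refine ⟨ih.2, this.elim (by omega) fun h ↦ ?_⟩
      have := f.injective (show f (n + 1 + 1) = f n by omega)
      omega
  exact (hsucc n).1

theorem Embedding.exists_iso_of_forall_mem_range_iff {H : SimpleGraph W} (r : H ↪g G) (φ : G ≃g G)
    (hφ : ∀ x, φ x ∈ Set.range r ↔ x ∈ Set.range r) :
    ∃ ψ : H ≃g H, ∀ w, φ (r w) = r (ψ w) := by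
  let e := Equiv.ofInjective r r.injective
  let ψ : W ≃ W := e.trans ((φ.toEquiv.subtypeEquiv fun x ↦ (hφ x).symm).trans e.symm)
  have hψ : ∀ w, r (ψ w) = φ (r w) := fun w ↦ Equiv.apply_ofInjective_symm r.injective _
  refine ⟨⟨ψ, fun {a b} ↦ ?_⟩, fun w ↦ (hψ w).symm⟩
  rw [← r.map_adj_iff, hψ, hψ, φ.map_adj_iff, r.map_adj_iff]

theorem HasExtensionProperty.apply_eq_self_of_forall_mem_range_ray_iff [DecidableEq V]
    (hG : G.HasExtensionProperty) {p : ℕ → V × V} (hp : Function.Surjective p) {v₀ : V}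
    {φ : G ≃g G} (hφ : ∀ x, φ x ∈ Set.range (hG.ray p v₀) ↔ x ∈ Set.range (hG.ray p v₀))
    (v : V) : φ v = v := by
  obtain ⟨ψ, hψ⟩ := (hG.rayEmbedding p v₀).exists_iso_of_forall_mem_range_iff φ hφ
  have hfix : ∀ n, φ (hG.ray p v₀ n) = hG.ray p v₀ n := fun n ↦
    (hψ n).trans (congrArg _ (hasse_nat_iso_apply ψ n))
  by_contra hv
  by_cases hvR : v ∈ Set.range (hG.ray p v₀)
  · obtain ⟨n, rfl⟩ := hvR
    exact hv (hfix n)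
  · obtain ⟨n, hn⟩ := hp (v, φ v)
    obtain ⟨hadj, hnadj⟩ := hG.ray_separates hn hvR (mt (hφ v).mp hvR) (Ne.symm hv)
    exact hnadj (hfix (n + 1) ▸ φ.map_adj_iff.mpr hadj)

theorem isDistinguishing_ite_mem {V : Type} {G : SimpleGraph V} (S : Set V)
    [DecidablePred (· ∈ S)] (hS : ∀ φ : G ≃g G, (∀ x, φ x ∈ S ↔ x ∈ S) → ∀ v, φ v = v) :
    G.IsDistinguishing 2 fun v ↦ if v ∈ S then 1 else 0 := by
  refine fun φ hφ ↦ hS φ fun x ↦ ?_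
  have := hφ x
  dsimp only at this
  split_ifs at this <;> simp_all

theorem HasExtensionProperty.exists_isDistinguishing_two {V : Type} {G : SimpleGraph V}
    [Countable V] (hG : G.HasExtensionProperty) : ∃ c : V → Fin 2, G.IsDistinguishing 2 c := by
  classical
  obtain ⟨v₀, -⟩ := hG ∅ ∅ (Finset.disjoint_empty_left _)
  have : Nonempty V := ⟨v₀⟩
  obtain ⟨p, hp⟩ := exists_surjective_nat (V × V)
  exact ⟨_, isDistinguishing_ite_mem (Set.range (hG.ray p v₀)) fun φ hφ ↦
    hG.apply_eq_self_of_forall_mem_range_ray_iff hp hφ⟩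

theorem distinguishingNumber_eq_two {V : Type} {G : SimpleGraph V}
    (hφ : ∃ φ : G ≃g G, ∃ v, φ v ≠ v) (hc : ∃ c : V → Fin 2, G.IsDistinguishing 2 c) :
    G.distinguishingNumber = 2 := by
  obtain ⟨φ, v, hv⟩ := hφ
  refine le_antisymm (Nat.sInf_le hc) (le_csInf ⟨2, hc⟩ ?_)
  rintro r ⟨c, hc⟩
  by_contra! hr
  interval_cases r
  · exact (c v).elim0
  · exact hv (hc φ (fun _ ↦ Subsingleton.elim _ _) v)

end SimpleGraph

/-- The distinguishing number of the random graph is 2. -/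
theorem distinguishingNumber_radoGraph {V : Type} (G : SimpleGraph V)
    (hG : IsRadoGraph G) : G.distinguishingNumber = 2 := by
  obtain ⟨_, _, hext⟩ := hG
  have hext : G.HasExtensionProperty := hext
  obtain ⟨u, w, huw⟩ := exists_pair_ne V
  obtain ⟨φ, hφ⟩ := hext.exists_iso_apply_eq u w
  exact G.distinguishingNumber_eq_two ⟨φ, u, hφ ▸ huw.symm⟩ hext.exists_isDistinguishing_two
end

section
/- The diamond principle ◊ implies there exists an ultrafilter U on ω that is not a P-point and such that (U, ⊇) is not Tukey equivalent to the finite sets of reals ordered by inclusion, i.e., ([ℝ]^{<ℵ₀}, ⊆). -/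
open Cardinal Set

/-- The first uncountable ordinal, as a (well-ordered) type. -/
noncomputable abbrev Omega1 : Type := (Cardinal.aleph 1).ord.ToType

/-- Closed unbounded subsets of `ω₁`. -/
def IsClubOmega1 (C : Set Omega1) : Prop :=
  (∀ a : Omega1, ∃ c ∈ C, a < c) ∧
    ∀ a : Omega1, (∃ b, b < a) → (∀ b < a, ∃ c ∈ C, b < c ∧ c < a) → a ∈ C

/-- Stationary subsets of `ω₁`. -/
def IsStationaryOmega1 (S : Set Omega1) : Prop :=
  ∀ C : Set Omega1, IsClubOmega1 C → (S ∩ C).Nonempty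

/-- Jensen's diamond principle `◊` on `ω₁`. -/
def DiamondPrinciple : Prop :=
  ∃ f : Omega1 → Set Omega1, (∀ a, f a ⊆ Iio a) ∧
    ∀ X : Set Omega1, IsStationaryOmega1 {a | X ∩ Iio a = f a}

/-- An ultrafilter on `ω` is a P-point if every countable family of its members has a
member almost contained in each of them. -/
def IsPPoint (U : Ultrafilter ℕ) : Prop :=
  ∀ A : ℕ → Set ℕ, (∀ n, A n ∈ U) → ∃ B ∈ U, ∀ n, (B \ A n).Finite

/-- `S` is unbounded with respect to the relation `r`. -/
def RelUnbounded {α : Type} (r : α → α → Prop) (S : Set α) : Prop :=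
  ¬ ∃ b, ∀ x ∈ S, r x b

/-- Tukey reducibility: a map carrying `r`-unbounded sets to `s`-unbounded sets. -/
def TukeyLE {α β : Type} (r : α → α → Prop) (s : β → β → Prop) : Prop :=
  ∃ f : α → β, ∀ S : Set α, RelUnbounded r S → RelUnbounded s (f '' S)

/-- Tukey equivalence of two directed (quasi-)orders. -/
def TukeyEquiv {α β : Type} (r : α → α → Prop) (s : β → β → Prop) : Prop :=
  TukeyLE r s ∧ TukeyLE s r

namespace NPT

/-- An infinite set and a finite set: the difference picks a fresh large element. -/
lemma exists_gt_mem {s : Set ℕ} (hs : s.Infinite) (n : ℕ) : ∃ m ∈ s, n < m := by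
  obtain ⟨m, hm, hnot⟩ := hs.exists_notMem_finite (Set.finite_Iic n)
  exact ⟨m, hm, by simpa using hnot⟩

/-- Splitting an infinite set by another set keeps one part infinite. -/
lemma infinite_inter_or_diff {s t : Set ℕ} (hs : s.Infinite) :
    (s ∩ t).Infinite ∨ (s \ t).Infinite := by
  by_contra h
  push_neg at h
  exact hs ((h.1.union h.2).subset (fun x hx => by
    by_cases hxt : x ∈ t
    · exact Or.inl ⟨hx, hxt⟩
    · exact Or.inr ⟨hx, hxt⟩))

/-- SEQ: sequential compactness of `2^ℕ`, combinatorial form.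
From any sequence of sets we extract a strictly monotone subsequence
pointwise converging (with explicit modulus) to a limit set. -/
lemma seq_compact (N : ℕ → Set ℕ) :
    ∃ κ : ℕ → ℕ, StrictMono κ ∧ ∃ Ninf : Set ℕ,
      ∀ x j, x ≤ j → (x ∈ N (κ j) ↔ x ∈ Ninf) := by
  classical
  -- nested decision sets
  let L : ℕ → Set ℕ := fun x => Nat.rec Set.univ
    (fun x Lx => if (Lx ∩ {k | x ∈ N k}).Infinite then Lx ∩ {k | x ∈ N k}
      else Lx \ {k | x ∈ N k}) x
  have hLinf : ∀ x, (L x).Infinite := by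
    intro x
    induction x with
    | zero => exact Set.infinite_univ
    | succ x ih =>
      by_cases h : (L x ∩ {k | x ∈ N k}).Infinite
      · rw [show L (x+1) = L x ∩ {k | x ∈ N k} from if_pos h]; exact h
      · rw [show L (x+1) = L x \ {k | x ∈ N k} from if_neg h]
        rcases infinite_inter_or_diff (t := {k | x ∈ N k}) ih with h' | h'
        · exact absurd h' h
        · exact h'
  have hLmono : ∀ x y, x ≤ y → L y ⊆ L x := by
    intro x y hxy
    induction y with
    | zero => simp_all
    | succ y ih =>
      rcases Nat.lt_or_ge x (y+1) with h | h
      · have h1 : L (y+1) ⊆ L y := by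
          by_cases h' : (L y ∩ {k | y ∈ N k}).Infinite
          · rw [show L (y+1) = L y ∩ {k | y ∈ N k} from if_pos h']
            exact Set.inter_subset_left
          · rw [show L (y+1) = L y \ {k | y ∈ N k} from if_neg h']
            exact Set.diff_subset
        exact h1.trans (ih (Nat.lt_succ_iff.mp h))
      · have : x = y + 1 := le_antisymm hxy h
        subst this; exact subset_rfl
  -- decision property
  have hLsucc : ∀ x, L (x+1) = if (L x ∩ {k | x ∈ N k}).Infinite then L x ∩ {k | x ∈ N k}
      else L x \ {k | x ∈ N k} := fun x => rfl
  have hdec : ∀ x, (∀ k ∈ L (x+1), x ∈ N k) ∨ (∀ k ∈ L (x+1), x ∉ N k) := by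
    intro x
    by_cases h : (L x ∩ {k | x ∈ N k}).Infinite
    · left; intro k hk; rw [hLsucc x, if_pos h] at hk; exact hk.2
    · right; intro k hk; rw [hLsucc x, if_neg h] at hk; exact hk.2
  -- diagonal sequence
  let κ : ℕ → ℕ := fun j => Nat.rec (Classical.choose ((hLinf 1).nonempty))
    (fun j kj => Classical.choose (exists_gt_mem (hLinf (j+2)) kj)) j
  have hκmem : ∀ j, κ j ∈ L (j+1) := by
    intro j
    cases j with
    | zero => exact Classical.choose_spec ((hLinf 1).nonempty)
    | succ j => exact (Classical.choose_spec (exists_gt_mem (hLinf (j+2)) (κ j))).1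
  have hκlt : ∀ j, κ j < κ (j+1) := fun j =>
    (Classical.choose_spec (exists_gt_mem (hLinf (j+2)) (κ j))).2
  refine ⟨κ, strictMono_nat_of_lt_succ hκlt, {x | ∀ k ∈ L (x+1), x ∈ N k}, ?_⟩
  intro x j hxj
  have hmem : κ j ∈ L (x+1) := hLmono (x+1) (j+1) (by omega) (hκmem j)
  constructor
  · intro hx
    rcases hdec x with h | h
    · exact h
    · exact absurd hx (h _ hmem)
  · intro hx
    exact hx _ hmem

section
variable {P : Ultrafilter ℕ}

/-- Nonprincipality in the convenient form. -/
def AllInf (P : Ultrafilter ℕ) : Prop := ∀ s ∈ P, s.Infinite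

/-- From a point-finite sequence of finite sets, a greedy pairwise disjoint subsequence. -/
lemma exists_disjoint_subseq (F : ℕ → Set ℕ) (hfin : ∀ j, (F j).Finite)
    (hpt : ∀ x, {j | x ∈ F j}.Finite) :
    ∃ σ : ℕ → ℕ, StrictMono σ ∧ ∀ i i', i ≠ i' → F (σ i) ∩ F (σ i') = ∅ := by
  classical
  have spec : ∀ p : ℕ, ∃ j, p < j ∧ ∀ l ≤ p, F j ∩ F l = ∅ := by
    intro p
    have hW : (⋃ l ∈ Set.Iic p, F l).Finite :=
      Set.Finite.biUnion (Set.finite_Iic p) (fun l _ => hfin l)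
    have hbad : {j | ∃ l ≤ p, (F j ∩ F l).Nonempty}.Finite := by
      apply Set.Finite.subset (hW.biUnion (fun x _ => hpt x))
      rintro j ⟨l, hl, x, hxj, hxl⟩
      exact Set.mem_biUnion (Set.mem_biUnion (Set.mem_Iic.2 hl) hxl) hxj
    obtain ⟨j, hj1, hj2⟩ := (Set.Ioi_infinite p).exists_notMem_finite hbad
    refine ⟨j, hj1, fun l hl => ?_⟩
    by_contra hne
    exact hj2 ⟨l, hl, Set.nonempty_iff_ne_empty.2 hne⟩
  let σ : ℕ → ℕ := fun i => Nat.rec 0 (fun _ prev => Classical.choose (spec prev)) i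
  have hσsucc : ∀ i, σ (i+1) = Classical.choose (spec (σ i)) := fun i => rfl
  have hlt : ∀ i, σ i < σ (i+1) := fun i => (Classical.choose_spec (spec (σ i))).1
  have hσ : StrictMono σ := strictMono_nat_of_lt_succ hlt
  refine ⟨σ, hσ, ?_⟩
  have key : ∀ i i', i < i' → F (σ i') ∩ F (σ i) = ∅ := by
    intro i i' hii
    obtain ⟨i'', rfl⟩ : ∃ i'', i' = i'' + 1 := ⟨i' - 1, by omega⟩
    have h2 := (Classical.choose_spec (spec (σ i''))).2
    rw [hσsucc]
    exact h2 (σ i) (hσ.monotone (by omega))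
  intro i i' hne
  rcases Nat.lt_or_ge i i' with h | h
  · rw [Set.inter_comm]; exact key i i' h
  · exact key i' i (by omega)

/-- COL: the key P-point convergence lemma. If a sequence of members of a P-point
converges (pointwise, on the limit set) to a member, then some infinite subsequence
has a common lower bound in the ultrafilter. -/
lemma col_lemma (hpp : ∀ A : ℕ → Set ℕ, (∀ n, A n ∈ P) →
      ∃ B ∈ P, ∀ n, (B \ A n).Finite)
    (D : ℕ → Set ℕ) (hD : ∀ k, D k ∈ P) {Dinf : Set ℕ} (hDinf : Dinf ∈ P)
    (hconv : ∀ x ∈ Dinf, ∃ m, ∀ k ≥ m, x ∈ D k) :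
    ∃ d ∈ P, d ⊆ Dinf ∧ ∃ σ : ℕ → ℕ, StrictMono σ ∧ ∀ i, d ⊆ D (σ i) := by
  classical
  obtain ⟨b, hb, hbfin⟩ := hpp (fun k => D k ∩ Dinf) (fun k => P.inter_sets (hD k) hDinf)
  set b₀ : Set ℕ := b ∩ Dinf with hb₀def
  have hb₀ : b₀ ∈ P := P.inter_sets hb hDinf
  set F : ℕ → Set ℕ := fun k => b₀ \ D k with hFdef
  have hFfin : ∀ k, (F k).Finite := by
    intro k
    apply (hbfin k).subset
    rintro x ⟨⟨hxb, hxD⟩, hxd⟩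
    exact ⟨hxb, fun h => hxd h.1⟩
  have hpt' : ∀ x, {k | x ∈ F k}.Finite := by
    intro x
    by_cases hx : x ∈ b₀
    · obtain ⟨m, hm⟩ := hconv x hx.2
      apply (Set.finite_Iio m).subset
      intro k hk
      simp only [Set.mem_setOf_eq, hFdef, Set.mem_diff] at hk
      by_contra hkm
      exact hk.2 (hm k (by simpa using hkm))
    · convert Set.finite_empty
      ext k
      simp only [Set.mem_setOf_eq, hFdef, Set.mem_diff]
      exact iff_false_intro (fun h => hx h.1)
  obtain ⟨σ, hσ, hdisj⟩ := exists_disjoint_subseq F hFfin hpt'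
  -- evens and odds
  set G : ℕ → Set ℕ := fun ε => ⋃ i, F (σ (2 * i + ε)) with hGdef
  have hGdisj : G 0 ∩ G 1 = ∅ := by
    ext x
    simp only [hGdef, Set.mem_inter_iff, Set.mem_iUnion, Set.mem_empty_iff_false, iff_false]
    rintro ⟨⟨i, hi⟩, ⟨i', hi'⟩⟩
    have := hdisj (2*i+0) (2*i'+1) (by omega)
    rw [Set.eq_empty_iff_forall_notMem] at this
    exact this x ⟨hi, hi'⟩
  have hnot : G 0 ∉ P ∨ G 1 ∉ P := by
    by_contra h
    push_neg at h
    have := P.inter_sets h.1 h.2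
    rw [hGdisj] at this
    exact P.toFilter.empty_notMem this
  obtain ⟨ε, hεbound, hε⟩ : ∃ ε, ε ≤ 1 ∧ G ε ∉ P := by
    rcases hnot with h | h
    exacts [⟨0, by omega, h⟩, ⟨1, by omega, h⟩]
  refine ⟨b₀ \ G ε, ?_, fun x hx => hx.1.2, fun i => σ (2 * i + ε), ?_, ?_⟩
  · have : (G ε)ᶜ ∈ P := (Ultrafilter.compl_mem_iff_notMem).2 hε
    exact P.toFilter.mem_of_superset (P.inter_sets hb₀ this) (fun x hx => ⟨hx.1, hx.2⟩)
  · intro i j hij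
    exact hσ (by omega)
  · intro i x hx
    by_contra hxD
    exact hx.2 (Set.mem_iUnion.2 ⟨i, ⟨hx.1, hxD⟩⟩)
end
lemma mk_omega1 : #Omega1 = Cardinal.aleph 1 := by
  exact (Cardinal.mk_toType (Cardinal.aleph 1).ord).trans (Cardinal.card_ord _)

lemma omega1_uncountable : ¬ Countable Omega1 := by
  intro h
  have := Cardinal.mk_le_aleph0_iff.2 h
  rw [mk_omega1] at this
  exact absurd (lt_of_lt_of_le Cardinal.aleph0_lt_aleph_one this) (lt_irrefl _)

instance : Infinite Omega1 := by
  rw [Cardinal.infinite_iff, mk_omega1]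
  exact le_of_lt Cardinal.aleph0_lt_aleph_one

lemma countable_Iio (a : Omega1) : (Set.Iio a).Countable := by
  set ι := Ordinal.ToType.mk (o := (Cardinal.aleph 1).ord) with hι
  set o : Ordinal := ((ι.symm a : Set.Iio (Cardinal.aleph 1).ord) : Ordinal) with ho
  have hocard : o.card ≤ ℵ₀ := by
    have h1 : o < (Cardinal.aleph 1).ord := (ι.symm a).2
    rw [Cardinal.lt_ord] at h1
    rw [← Cardinal.succ_aleph0, Order.lt_succ_iff] at h1
    exact h1
  have hcnt : Countable (Set.Iio o) := by
    rw [← Cardinal.mk_le_aleph0_iff, Ordinal.mk_Iio_ordinal]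
    have := Cardinal.lift_le.{1}.2 hocard
    simpa using this
  rw [← Set.countable_coe_iff]
  have hinj : Function.Injective (fun x : Set.Iio a =>
      (⟨((ι.symm x.1 : Set.Iio (Cardinal.aleph 1).ord) : Ordinal), by
        have : ι.symm x.1 < ι.symm a := by
          rw [OrderIso.lt_iff_lt]
          exact x.2
        exact this⟩ : Set.Iio o)) := by
    intro x y hxy
    simp only [Subtype.mk.injEq] at hxy
    have h1 : ((ι.symm x.1 : Set.Iio (Cardinal.aleph 1).ord) : Ordinal)
        = ((ι.symm y.1 : Set.Iio (Cardinal.aleph 1).ord) : Ordinal) := Subtype.mk.inj hxy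
    have h2 : (ι.symm x.1 : Set.Iio (Cardinal.aleph 1).ord) = ι.symm y.1 := Subtype.ext h1
    exact Subtype.ext (ι.symm.injective h2)
  exact Function.Injective.countable hinj

lemma exists_upper {S : Set Omega1} (hS : S.Countable) : ∃ b : Omega1, ∀ x ∈ S, x < b := by
  have hT : (⋃ x ∈ S, Set.Iic x).Countable :=
    Set.Countable.biUnion hS (fun x _ => ((countable_Iio x).union (Set.countable_singleton x)).mono
      (by intro y hy; rcases lt_or_eq_of_le (Set.mem_Iic.1 hy) with h | h
          exacts [Or.inl h, Or.inr (by simp [h])]))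
  have : (⋃ x ∈ S, Set.Iic x) ≠ Set.univ := by
    intro h
    exact omega1_uncountable (by rw [← Set.countable_univ_iff (α := Omega1)] ; rw [← h]; exact hT)
  obtain ⟨b, hb⟩ : ∃ b, b ∉ ⋃ x ∈ S, Set.Iic x := by
    by_contra h
    push_neg at h
    exact this (Set.eq_univ_of_forall h)
  refine ⟨b, fun x hx => ?_⟩
  by_contra hbx
  exact hb (Set.mem_biUnion hx (Set.mem_Iic.2 (not_lt.1 hbx)))

/-- `◊` gives an injection of the continuum into `ω₁`. -/
lemma diamond_inj (hD : DiamondPrinciple) : ∃ g : Set ℕ → Omega1, Function.Injective g := by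
  classical
  obtain ⟨f, hf1, hf2⟩ := hD
  obtain ⟨i⟩ : Nonempty (ℕ ↪ Omega1) := ⟨Infinite.natEmbedding Omega1⟩
  obtain ⟨w, hw⟩ := exists_upper (Set.countable_range i)
  have hwi : ∀ n, i n < w := fun n => hw _ (Set.mem_range_self n)
  have hclub : IsClubOmega1 (Set.Ioi w) := by
    constructor
    · intro a
      obtain ⟨c, hc⟩ := exists_upper (Set.Countable.insert a (Set.countable_singleton w))
      exact ⟨c, hc w (by simp), hc a (by simp)⟩
    · rintro a ⟨b0, hb0⟩ h
      obtain ⟨c, hc, hbc, hca⟩ := h b0 hb0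
      exact lt_trans hc hca
  have key : ∀ X : Set ℕ, ∃ a : Omega1, (i '' X) ∩ Set.Iio a = f a ∧ w < a := by
    intro X
    obtain ⟨a, ha1, ha2⟩ := hf2 (i '' X) (Set.Ioi w) hclub
    exact ⟨a, ha1, ha2⟩
  refine ⟨fun X => (key X).choose, ?_⟩
  intro X Y hXY
  simp only at hXY
  have hX := (key X).choose_spec
  have hY := (key Y).choose_spec
  rw [hXY] at hX
  have hsub : ∀ Z : Set ℕ, (i '' Z) ∩ Set.Iio ((key Y).choose) = i '' Z := by
    intro Z
    apply Set.inter_eq_self_of_subset_left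
    rintro x ⟨n, _, rfl⟩
    exact lt_trans (hwi n) hY.2
  have himg : i '' X = i '' Y := by
    have e1 := hsub X
    have e2 := hsub Y
    rw [hX.1] at e1
    rw [hY.1] at e2
    rw [← e1]
    exact e2
  have : X = Y := by
    apply Set.image_injective.2 i.injective himg
  exact this

/-- Pseudo-intersection of a tower with infinite finite-intersections. -/
lemma pseudo_inter (D : ℕ → Set ℕ) (h : ∀ n, (⋂ i ∈ Set.Iic n, D i).Infinite) :
    ∃ c : Set ℕ, c.Infinite ∧ ∀ i, (c \ D i).Finite := by
  classical
  let x : ℕ → ℕ := fun n => Nat.rec (Classical.choose (h 0).nonempty)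
    (fun n prev => Classical.choose (exists_gt_mem (h (n+1)) prev)) n
  have hx0 : x 0 ∈ ⋂ i ∈ Set.Iic 0, D i := Classical.choose_spec (h 0).nonempty
  have hxsucc : ∀ n, x (n+1) ∈ (⋂ i ∈ Set.Iic (n+1), D i) ∧ x n < x (n+1) :=
    fun n => Classical.choose_spec (exists_gt_mem (h (n+1)) (x n))
  have hmem : ∀ n, x n ∈ ⋂ i ∈ Set.Iic n, D i := by
    intro n; cases n with
    | zero => exact hx0
    | succ n => exact (hxsucc n).1
  have hmono : StrictMono x := strictMono_nat_of_lt_succ (fun n => (hxsucc n).2)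
  refine ⟨Set.range x, Set.infinite_range_of_injective hmono.injective, fun i => ?_⟩
  apply (Set.Finite.image x (Set.finite_Iio i)).subset
  rintro y ⟨⟨n, rfl⟩, hy⟩
  refine ⟨n, ?_, rfl⟩
  simp only [Set.mem_Iio]
  by_contra hni
  exact hy (Set.mem_iInter₂.1 (hmem n) i (Set.mem_Iic.2 (by omega)))

variable (X : Omega1 → Set ℕ)

open scoped Classical in
/-- The transfinite `⊆*`-decreasing tower deciding each `X a`. -/
noncomputable def chain : Omega1 → Set ℕ :=
  (IsWellFounded.wf (α := Omega1) (r := (· < ·))).fix fun a ih =>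
    if h : ∃ c : Set ℕ, c.Infinite ∧ (c ⊆ X a ∨ c ⊆ (X a)ᶜ) ∧
        ∀ b, ∀ hb : b < a, (c \ ih b hb).Finite
    then h.choose else ∅

open scoped Classical in
lemma chain_eq (a : Omega1) : chain X a =
    if h : ∃ c : Set ℕ, c.Infinite ∧ (c ⊆ X a ∨ c ⊆ (X a)ᶜ) ∧
        ∀ b, ∀ _ : b < a, (c \ chain X b).Finite
    then h.choose else ∅ :=
  WellFounded.fix_eq _ _ a

def GoodAt (a : Omega1) : Prop :=
  (chain X a).Infinite ∧ (chain X a ⊆ X a ∨ chain X a ⊆ (X a)ᶜ) ∧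
    ∀ b, b < a → (chain X a \ chain X b).Finite

lemma goodAt (a : Omega1) : GoodAt X a := by
  classical
  induction a using ((IsWellFounded.wf (α := Omega1) (r := (· < ·))).induction) with
  | _ a IH =>
  have hex : ∃ c : Set ℕ, c.Infinite ∧ (c ⊆ X a ∨ c ⊆ (X a)ᶜ) ∧
      ∀ b, ∀ _ : b < a, (c \ chain X b).Finite := by
    -- first get a pseudo-intersection c₀ of all chain X b, b < a
    have hc₀ : ∃ c₀ : Set ℕ, c₀.Infinite ∧ ∀ b, b < a → (c₀ \ chain X b).Finite := by
      rcases Set.eq_empty_or_nonempty (Set.Iio a) with hemp | hne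
      · refine ⟨Set.univ, Set.infinite_univ, fun b hb => ?_⟩
        exact absurd (Set.mem_Iio.2 hb) (by rw [hemp]; exact Set.notMem_empty b)
      · obtain ⟨e, he⟩ := Set.Countable.exists_eq_range (countable_Iio a) hne
        have hemem : ∀ n, e n < a := by
          intro n
          have : e n ∈ Set.Iio a := by rw [he]; exact Set.mem_range_self n
          exact Set.mem_Iio.1 this
        have hfin : ∀ n, (⋂ i ∈ Set.Iic n, chain X (e i)).Infinite := by
          intro n
          obtain ⟨m, hmn, hm⟩ : ∃ m ∈ Finset.Iic n, ∀ i ∈ Finset.Iic n, e i ≤ e m :=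
            Finset.exists_max_image (Finset.Iic n) e ⟨n, by simp⟩
          have hdiff : ∀ i, i ≤ n → (chain X (e m) \ chain X (e i)).Finite := by
            intro i hi
            rcases lt_or_eq_of_le (hm i (by simpa using hi)) with h | h
            · exact (IH (e m) (hemem m)).2.2 (e i) h
            · rw [h]; simp
          have hbig : (chain X (e m) \ ⋃ i ∈ Set.Iic n, (chain X (e m) \ chain X (e i))).Infinite :=
            ((IH (e m) (hemem m)).1).diff
              (Set.Finite.biUnion (Set.finite_Iic n) (fun i hi => hdiff i hi))
          apply hbig.mono
          intro y hy
          rw [Set.mem_iInter₂]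
          intro i hi
          by_contra hni
          exact hy.2 (Set.mem_biUnion hi ⟨hy.1, hni⟩)
        obtain ⟨c₀, hc₀inf, hc₀⟩ := pseudo_inter (fun n => chain X (e n)) hfin
        refine ⟨c₀, hc₀inf, fun b hb => ?_⟩
        obtain ⟨n, rfl⟩ : ∃ n, e n = b := by
          have : b ∈ Set.range e := by rw [← he]; exact Set.mem_Iio.2 hb
          exact this
        exact hc₀ n
    obtain ⟨c₀, hc₀inf, hc₀⟩ := hc₀
    rcases infinite_inter_or_diff (t := X a) hc₀inf with h | h
    · exact ⟨c₀ ∩ X a, h, Or.inl Set.inter_subset_right,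
        fun b hb => (hc₀ b hb).subset (fun y hy => ⟨hy.1.1, hy.2⟩)⟩
    · refine ⟨c₀ \ X a, h, Or.inr (fun y hy => hy.2),
        fun b hb => (hc₀ b hb).subset (fun y hy => ⟨hy.1.1, hy.2⟩)⟩
  have : chain X a = hex.choose := by
    rw [chain_eq X a, dif_pos hex]
  rw [GoodAt, this]
  exact hex.choose_spec

lemma chain_infinite (a : Omega1) : (chain X a).Infinite := (goodAt X a).1

lemma chain_diff_fin {b a : Omega1} (hba : b ≤ a) : (chain X a \ chain X b).Finite := by
  rcases lt_or_eq_of_le hba with h | h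
  · exact (goodAt X a).2.2 b h
  · rw [h]; simp

/-- The filter generated by the tower. -/
noncomputable def towerUlt (hX : ∀ s : Set ℕ, ∃ a, X a = s) : Ultrafilter ℕ := by
  classical
  refine Ultrafilter.ofComplNotMemIff
    (Filter.mk {A | ∃ a, (chain X a \ A).Finite} ?_ ?_ ?_) ?_
  · exact ⟨Classical.arbitrary Omega1, by simp⟩
  · rintro A B ⟨a, ha⟩ hAB
    exact ⟨a, ha.subset (fun y hy => ⟨hy.1, fun h => hy.2 (hAB h)⟩)⟩
  · rintro A B ⟨a, ha⟩ ⟨b, hb⟩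
    refine ⟨max a b, ?_⟩
    have h1 : (chain X (max a b) \ chain X a).Finite := chain_diff_fin X (le_max_left a b)
    have h2 : (chain X (max a b) \ chain X b).Finite := chain_diff_fin X (le_max_right a b)
    apply ((h1.union ha).union (h2.union hb)).subset
    intro y hy
    by_cases hya : y ∈ A
    · by_cases hyb : y ∈ B
      · exact absurd ⟨hya, hyb⟩ hy.2
      · right
        by_cases hyc : y ∈ chain X b
        · exact Or.inr ⟨hyc, hyb⟩
        · exact Or.inl ⟨hy.1, hyc⟩
    · left
      by_cases hyc : y ∈ chain X a
      · exact Or.inr ⟨hyc, hya⟩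
      · exact Or.inl ⟨hy.1, hyc⟩
  · intro s
    constructor
    · rintro hns
      obtain ⟨a, ha⟩ := hX s
      rcases (goodAt X a).2.1 with h | h
      · rw [ha] at h
        exact ⟨a, by rw [Set.diff_eq_empty.2 h]; exact Set.finite_empty⟩
      · exfalso
        apply hns
        rw [ha] at h
        exact ⟨a, by rw [Set.diff_eq_empty.2 h]; exact Set.finite_empty⟩
    · rintro ⟨a, ha⟩ ⟨b, hb⟩
      have h1 : (chain X (max a b) \ chain X a).Finite := chain_diff_fin X (le_max_left a b)
      have h2 : (chain X (max a b) \ chain X b).Finite := chain_diff_fin X (le_max_right a b)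
      apply chain_infinite X (max a b)
      apply ((h1.union ha).union (h2.union hb)).subset
      intro y _
      by_cases hys : y ∈ s
      · right
        by_cases hyc : y ∈ chain X b
        · exact Or.inr ⟨hyc, by simpa using hys⟩
        · exact Or.inl ⟨by assumption, hyc⟩
      · left
        by_cases hyc : y ∈ chain X a
        · exact Or.inr ⟨hyc, hys⟩
        · exact Or.inl ⟨by assumption, hyc⟩

lemma mem_towerUlt (hX : ∀ s : Set ℕ, ∃ a, X a = s) (A : Set ℕ) :
    A ∈ towerUlt X hX ↔ ∃ a, (chain X a \ A).Finite := Iff.rfl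

lemma towerUlt_allInf (hX : ∀ s : Set ℕ, ∃ a, X a = s) :
    ∀ A ∈ towerUlt X hX, A.Infinite := by
  rintro A ⟨a, ha⟩
  exact (((chain_infinite X a).diff ha).mono (fun y hy => by
    by_contra hyA
    exact hy.2 ⟨hy.1, hyA⟩))

lemma towerUlt_ppoint (hX : ∀ s : Set ℕ, ∃ a, X a = s) :
    ∀ A : ℕ → Set ℕ, (∀ n, A n ∈ towerUlt X hX) → ∃ B ∈ towerUlt X hX, ∀ n, (B \ A n).Finite := by
  intro A hA
  classical
  have wit : ∀ n, ∃ a, (chain X a \ A n).Finite := hA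
  obtain ⟨b, hb⟩ := exists_upper (Set.countable_range (fun n => (wit n).choose))
  refine ⟨chain X b, ⟨b, by simp⟩, fun n => ?_⟩
  have h1 : (chain X b \ chain X ((wit n).choose)).Finite :=
    chain_diff_fin X (le_of_lt (hb _ (Set.mem_range_self n)))
  apply (h1.union ((wit n).choose_spec)).subset
  intro y hy
  by_cases hyc : y ∈ chain X ((wit n).choose)
  · exact Or.inr ⟨hyc, hy.2⟩
  · exact Or.inl ⟨hy.1, hyc⟩

/-- Summary: existence of a nonprincipal P-point from an injection `Set ℕ ↪ ω₁`. -/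
lemma exists_ppoint (h : ∃ g : Set ℕ → Omega1, Function.Injective g) :
    ∃ P : Ultrafilter ℕ, (∀ A ∈ P, A.Infinite) ∧
      (∀ A : ℕ → Set ℕ, (∀ n, A n ∈ P) → ∃ B ∈ P, ∀ n, (B \ A n).Finite) := by
  classical
  obtain ⟨g, hg⟩ := h
  have hX : ∀ s : Set ℕ, ∃ a, Function.invFun g a = s := fun s =>
    ⟨g s, Function.leftInverse_invFun hg s⟩
  exact ⟨towerUlt _ hX, towerUlt_allInf _ hX, towerUlt_ppoint _ hX⟩

section Product
variable (P : Ultrafilter ℕ)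

/-- Column of a subset of the plane. -/
def colV (A : Set (ℕ × ℕ)) (n : ℕ) : Set ℕ := {k | (n, k) ∈ A}

/-- The Fubini product `P ⊗ P`. -/
noncomputable def fub : Ultrafilter (ℕ × ℕ) := by
  refine Ultrafilter.ofComplNotMemIff
    (Filter.mk {A | {n | colV A n ∈ P} ∈ P} ?_ ?_ ?_) ?_
  · have : ∀ n, colV Set.univ n ∈ P := fun n => by
      have : colV Set.univ n = Set.univ := by ext k; simp [colV]
      rw [this]; exact Filter.univ_mem
    exact Filter.mem_of_superset Filter.univ_mem (fun n _ => this n)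
  · intro A B hA hAB
    apply P.toFilter.mem_of_superset hA
    intro n hn
    exact P.toFilter.mem_of_superset hn (fun k hk => hAB hk)
  · intro A B hA hB
    apply P.toFilter.mem_of_superset (P.inter_sets hA hB)
    rintro n ⟨hnA, hnB⟩
    exact P.inter_sets hnA hnB
  · intro s
    have hcol : ∀ n, colV sᶜ n = (colV s n)ᶜ := fun n => by ext k; simp [colV]
    show ¬ ({n | colV sᶜ n ∈ P} ∈ P) ↔ _
    have : {n | colV sᶜ n ∈ P} = {n | colV s n ∈ P}ᶜ := by
      ext n
      simp only [hcol, Set.mem_setOf_eq, Set.mem_compl_iff]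
      exact Ultrafilter.compl_mem_iff_notMem
    rw [this, Ultrafilter.compl_mem_iff_notMem, not_not]
    exact Iff.rfl

lemma mem_fub (A : Set (ℕ × ℕ)) : A ∈ fub P ↔ {n | colV A n ∈ P} ∈ P := Iff.rfl

/-- Base-shaped sets: all columns are in `P` or empty. -/
def Basish (A : Set (ℕ × ℕ)) : Prop :=
  A ∈ fub P ∧ ∀ n, colV A n ∈ P ∨ colV A n = ∅

lemma base_cofinal {A : Set (ℕ × ℕ)} (hA : A ∈ fub P) :
    ∃ B, B ⊆ A ∧ Basish P B := by
  classical
  refine ⟨{p | p ∈ A ∧ colV A p.1 ∈ P}, fun p hp => hp.1, ?_, ?_⟩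
  · rw [mem_fub]
    apply P.toFilter.mem_of_superset hA
    intro n hn
    have : colV {p | p ∈ A ∧ colV A p.1 ∈ P} n = colV A n := by
      ext k; simp only [colV, Set.mem_setOf_eq]; tauto
    rw [Set.mem_setOf_eq, this]; exact hn
  · intro n
    by_cases hn : colV A n ∈ P
    · left
      have : colV {p | p ∈ A ∧ colV A p.1 ∈ P} n = colV A n := by
        ext k; simp only [colV, Set.mem_setOf_eq]; tauto
      rwa [this]
    · right
      ext k; simp only [colV, Set.mem_setOf_eq]
      exact iff_false_intro (fun h => hn h.2)

variable {P}

/-- MAIN: the fusion lemma; a convergent sequence of base-shaped sets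
has a subsequence with a common lower bound in the product ultrafilter. -/
lemma main_fusion (hP : ∀ s ∈ P, s.Infinite)
    (hpp : ∀ A : ℕ → Set ℕ, (∀ n, A n ∈ P) → ∃ B ∈ P, ∀ n, (B \ A n).Finite)
    (T : ℕ → Set (ℕ × ℕ)) (hT : ∀ j, Basish P (T j))
    {Tinf : Set (ℕ × ℕ)} (hTinf : Basish P Tinf)
    (hconv : ∀ y : ℕ × ℕ, ∃ m, ∀ j ≥ m, (y ∈ T j ↔ y ∈ Tinf)) :
    ∃ c ∈ fub P, ∃ τ : ℕ → ℕ, StrictMono τ ∧ ∀ i, c ⊆ T (τ i) := by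
  classical
  set N : ℕ → Set ℕ := fun j => {n | colV (T j) n ∈ P} with hNdef
  have hN : ∀ j, N j ∈ P := fun j => (hT j).1
  set Ninf : Set ℕ := {n | colV Tinf n ∈ P} with hNinfdef
  have hNinf : Ninf ∈ P := hTinf.1
  obtain ⟨κ₀, hκ₀, Minf, hMdec⟩ := seq_compact N
  have hNM : Ninf ⊆ Minf := by
    intro x hx
    obtain ⟨k₀, hk₀⟩ := (hP _ hx).nonempty
    obtain ⟨m, hm⟩ := hconv (x, k₀)
    have hj : x ∈ N (κ₀ (max x m)) := by
      have h1 : (x, k₀) ∈ T (κ₀ (max x m)) :=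
        (hm _ (le_trans (le_max_right x m) hκ₀.le_apply)).2 hk₀
      rcases (hT (κ₀ (max x m))).2 x with h | h
      · exact h
      · exfalso
        have : k₀ ∈ colV (T (κ₀ (max x m))) x := h1
        rw [h] at this
        exact this
    exact (hMdec x (max x m) (le_max_left x m)).1 hj
  have hMinf : Minf ∈ P := P.toFilter.mem_of_superset hNinf hNM
  obtain ⟨M₁, hM₁, hM₁sub, σ₁, hσ₁, hM₁N⟩ :=
    col_lemma hpp (fun j => N (κ₀ j)) (fun j => hN _) hMinf
      (fun x hx => ⟨x, fun j hj => (hMdec x j hj).2 hx⟩)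
  set κ : ℕ → ℕ := κ₀ ∘ σ₁ with hκdef
  have hκ : StrictMono κ := hκ₀.comp hσ₁
  set M : Set ℕ := M₁ ∩ Ninf with hMdef
  have hM : M ∈ P := P.inter_sets hM₁ hNinf
  have hMN : ∀ i, ∀ n ∈ M, colV (T (κ i)) n ∈ P := fun i n hn => hM₁N i hn.1
  have hMTinf : ∀ n ∈ M, colV Tinf n ∈ P := fun n hn => hn.2
  have hMinfinite : M.Infinite := hP _ hM
  set ν : ℕ → ℕ := Nat.nth (· ∈ M) with hνdef
  have hνmono : StrictMono ν := Nat.nth_strictMono hMinfinite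
  have hνmem : ∀ j, ν j ∈ M := fun j => Nat.nth_mem_of_infinite hMinfinite j
  have hνrange : Set.range ν = M := Nat.range_nth_of_infinite hMinfinite
  -- the column-step existence
  have stepEx : ∀ (j : ℕ) (e : ℕ → ℕ), StrictMono e →
      ∃ d ∈ P, d ⊆ colV Tinf (ν j) ∧ ∃ σ : ℕ → ℕ, StrictMono σ ∧
        ∀ i, d ⊆ colV (T (κ (e (σ i)))) (ν j) := by
    intro j e he
    apply col_lemma hpp (fun i => colV (T (κ (e i))) (ν j))
      (fun i => hMN _ _ (hνmem j)) (hMTinf _ (hνmem j))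
    intro k hk
    obtain ⟨m, hm⟩ := hconv (ν j, k)
    refine ⟨m, fun i hi => ?_⟩
    exact (hm _ (le_trans hi (le_trans he.le_apply (hκ.le_apply)))).2 hk
  -- choice functions for the recursion
  let sigOf : ℕ → (ℕ → ℕ) → (ℕ → ℕ) := fun j e =>
    if h : StrictMono e then (stepEx j e h).choose_spec.2.2.choose else id
  let E : ℕ → (ℕ → ℕ) := fun j => Nat.rec id (fun j e => e ∘ sigOf j e) j
  have hE0 : E 0 = id := rfl
  have hEsucc : ∀ j, E (j+1) = E j ∘ sigOf j (E j) := fun j => rfl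
  have hEmono : ∀ j, StrictMono (E j) := by
    intro j
    induction j with
    | zero => exact fun a b h => h
    | succ j ih =>
      rw [hEsucc]
      apply ih.comp
      have h2 : sigOf j (E j) = (stepEx j (E j) ih).choose_spec.2.2.choose := dif_pos ih
      show StrictMono (sigOf j (E j))
      rw [h2]
      exact (stepEx j (E j) ih).choose_spec.2.2.choose_spec.1
  let d : ℕ → Set ℕ := fun j => (stepEx j (E j) (hEmono j)).choose
  have hd : ∀ j, d j ∈ P ∧ d j ⊆ colV Tinf (ν j) ∧
      ∀ i, d j ⊆ colV (T (κ (E (j+1) i))) (ν j) := by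
    intro j
    have hsp := (stepEx j (E j) (hEmono j)).choose_spec
    refine ⟨hsp.1, hsp.2.1, ?_⟩
    intro i
    have := hsp.2.2.choose_spec.2 i
    rw [hEsucc]
    show d j ⊆ colV (T (κ (E j (sigOf j (E j) i)))) (ν j)
    have hsig : sigOf j (E j) = hsp.2.2.choose := dif_pos (hEmono j)
    rw [hsig]
    exact this
  -- ranges are nested
  have hrange : ∀ j j', j ≤ j' → ∀ i, ∃ w, E j' i = E j w := by
    intro j j' hjj'
    induction j' with
    | zero =>
      intro i
      have : j = 0 := by omega
      exact ⟨i, by rw [this]⟩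
    | succ j' ih =>
      intro i
      rcases Nat.lt_or_ge j (j'+1) with h | h
      · obtain ⟨w, hw⟩ := ih (by omega) (sigOf j' (E j') i)
        exact ⟨w, by rw [hEsucc]; exact hw⟩
      · have : j = j' + 1 := by omega
        exact ⟨i, by rw [this]⟩
  -- the diagonal indices
  let l : ℕ → ℕ := fun i => Nat.rec (E 1 0) (fun i prev => E (i+2) (prev + 1)) i
  have hl0 : l 0 = E 1 0 := rfl
  have hlsucc : ∀ i, l (i+1) = E (i+2) (l i + 1) := fun i => rfl
  have hlmono : StrictMono l := by
    apply strictMono_nat_of_lt_succ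
    intro i
    rw [hlsucc]
    calc l i < l i + 1 := by omega
    _ ≤ E (i+2) (l i + 1) := (hEmono (i+2)).le_apply
  have hlrep : ∀ i j, j ≤ i → ∃ w, l i = E (j+1) w := by
    intro i j hji
    cases i with
    | zero =>
      have : j = 0 := by omega
      subst this
      exact ⟨0, hl0⟩
    | succ i =>
      obtain ⟨w, hw⟩ := hrange (j+1) (i+2) (by omega) (l i + 1)
      exact ⟨w, by rw [hlsucc]; exact hw⟩
  -- the fusion set
  set c : Set (ℕ × ℕ) :=
    ⋃ j, {ν j} ×ˢ (d j ∩ ⋂ i ∈ Set.Iic j, colV (T (κ (l i))) (ν j)) with hcdef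
  have hcol : ∀ j, colV c (ν j) = d j ∩ ⋂ i ∈ Set.Iic j, colV (T (κ (l i))) (ν j) := by
    intro j
    ext k
    simp only [colV, hcdef, Set.mem_iUnion, Set.mem_setOf_eq, Set.mem_prod,
      Set.mem_singleton_iff]
    constructor
    · rintro ⟨j', hj'1, hj'2⟩
      rwa [hνmono.injective hj'1.symm] at hj'2
    · intro hk
      exact ⟨j, ⟨rfl, hk⟩⟩
  refine ⟨c, ?_, fun i => κ (l i), hκ.comp hlmono, ?_⟩
  · rw [mem_fub]
    apply P.toFilter.mem_of_superset hM
    intro n hn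
    obtain ⟨j, rfl⟩ : ∃ j, ν j = n := by rw [← hνrange] at hn; exact hn
    rw [Set.mem_setOf_eq, hcol j]
    apply P.inter_sets (hd j).1
    exact (Filter.biInter_mem (Set.finite_Iic j)).2 (fun i _ => hMN _ _ (hνmem j))
  · rintro i ⟨n, k⟩ hp
    simp only [hcdef, Set.mem_iUnion, Set.mem_prod, Set.mem_singleton_iff] at hp
    obtain ⟨j, rfl, hk, hints⟩ := hp
    rcases Nat.lt_or_ge j i with hji | hij
    · -- j < i : use that d j is below all later columns
      obtain ⟨w, hw⟩ := hlrep i j (by omega)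
      have := ((hd j).2.2 w) hk
      rw [← hw] at this
      exact this
    · -- i ≤ j : use the finite intersection
      exact Set.mem_iInter₂.1 hints i (Set.mem_Iic.2 hij)
end Product
/-- Condensation: an uncountable family of subsets of a countable type contains a member
which is the pointwise limit of a sequence of pairwise distinct members. -/
lemma condensation {α : Type} [Countable α] [Nonempty α]
    (S : Set (Set α)) (hS : ¬ S.Countable) :
    ∃ T ∈ S, ∃ Tseq : ℕ → Set α, (∀ n, Tseq n ∈ S) ∧ Function.Injective Tseq ∧
      ∀ y : α, ∃ m, ∀ j ≥ m, (y ∈ Tseq j ↔ y ∈ T) := by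
  classical
  obtain ⟨g, hg⟩ := exists_surjective_nat α
  set Agr : Set α → ℕ → Set (Set α) :=
    fun T n => {y ∈ S | ∀ i < n, (g i ∈ y ↔ g i ∈ T)} with hAgr
  -- find a condensation point
  have hcp : ∃ T ∈ S, ∀ n, ¬ (Agr T n).Countable := by
    by_contra hno
    push_neg at hno
    apply hS
    -- encode
    set nn : Set α → ℕ := fun T => if h : T ∈ S then (hno T h).choose else 0 with hnn
    have hnnsp : ∀ T ∈ S, (Agr T (nn T)).Countable := by
      intro T hT
      have : nn T = (hno T hT).choose := dif_pos hT
      rw [this]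
      exact (hno T hT).choose_spec
    set code : Set α → ℕ × Finset ℕ :=
      fun T => (nn T, (Finset.range (nn T)).filter (fun i => g i ∈ T)) with hcode
    set W : ℕ × Finset ℕ → Set (Set α) := fun p =>
      if h : ∃ T, T ∈ S ∧ code T = p then Agr h.choose p.1 else ∅ with hW
    have hsub : S ⊆ ⋃ p : ℕ × Finset ℕ, W p := by
      intro T hT
      apply Set.mem_iUnion.2 ⟨code T, ?_⟩
      have hex : ∃ T', T' ∈ S ∧ code T' = code T := ⟨T, hT, rfl⟩
      have hWp : W (code T) = Agr hex.choose (code T).1 := dif_pos hex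
      rw [hWp]
      obtain ⟨hc1, hc2⟩ := hex.choose_spec
      refine ⟨hT, ?_⟩
      intro i hi
      have hn : nn hex.choose = nn T := congrArg Prod.fst hc2
      have hfil : (Finset.range (nn hex.choose)).filter (fun i => g i ∈ hex.choose) =
          (Finset.range (nn T)).filter (fun i => g i ∈ T) := congrArg Prod.snd hc2
      have hi' : i < nn T := hi
      constructor
      · intro hyi
        have hmem : i ∈ (Finset.range (nn T)).filter (fun i => g i ∈ T) :=
          Finset.mem_filter.2 ⟨Finset.mem_range.2 hi', hyi⟩
        rw [← hfil] at hmem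
        exact (Finset.mem_filter.1 hmem).2
      · intro hyt
        have hmem : i ∈ (Finset.range (nn hex.choose)).filter (fun i => g i ∈ hex.choose) :=
          Finset.mem_filter.2 ⟨Finset.mem_range.2 (by rw [hn]; exact hi'), hyt⟩
        rw [hfil] at hmem
        exact (Finset.mem_filter.1 hmem).2
    apply Set.Countable.mono hsub
    apply Set.countable_iUnion
    intro p
    by_cases h : ∃ T, T ∈ S ∧ code T = p
    · have hWp : W p = Agr h.choose p.1 := dif_pos h
      rw [hWp]
      have h1 := h.choose_spec.1
      have h2 : p.1 = nn h.choose := (congrArg Prod.fst h.choose_spec.2).symm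
      rw [h2]
      exact hnnsp _ h1
    · have hWp : W p = ∅ := dif_neg h
      rw [hWp]
      exact Set.countable_empty
  obtain ⟨T, hTS, hT⟩ := hcp
  -- recursively pick distinct members
  have spec : ∀ (n : ℕ) (A : Set (Set α)), A.Finite → ∃ y, y ∈ Agr T n ∧ y ∉ A := by
    intro n A hA
    by_contra h
    push_neg at h
    exact hT n (hA.countable.mono (fun y hy => h y hy))
  set F : ℕ → List (Set α) → Set α := fun n l => (spec n {y | y ∈ l} l.finite_toSet).choose
    with hF
  set L : ℕ → List (Set α) := fun n => Nat.rec [] (fun n l => l ++ [F n l]) n with hL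
  set Tseq : ℕ → Set α := fun n => F n (L n) with hTseq
  have hLsucc : ∀ n, L (n+1) = L n ++ [Tseq n] := fun n => rfl
  have hmemL : ∀ n y, y ∈ L n ↔ ∃ m < n, Tseq m = y := by
    intro n
    induction n with
    | zero => intro y; simp [hL]
    | succ n ih =>
      intro y
      rw [hLsucc]
      simp only [List.mem_append, List.mem_singleton, ih y]
      constructor
      · rintro (⟨m, hm, rfl⟩ | rfl)
        · exact ⟨m, by omega, rfl⟩
        · exact ⟨n, by omega, rfl⟩
      · rintro ⟨m, hm, rfl⟩
        rcases Nat.lt_or_ge m n with h | h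
        · exact Or.inl ⟨m, h, rfl⟩
        · have : m = n := by omega
          subst this
          exact Or.inr rfl
  have hTspec : ∀ n, Tseq n ∈ Agr T n ∧ Tseq n ∉ {y : Set α | y ∈ L n} :=
    fun n => (spec n {y | y ∈ L n} (L n).finite_toSet).choose_spec
  refine ⟨T, hTS, Tseq, fun n => (hTspec n).1.1, ?_, ?_⟩
  · intro m n hmn
    by_contra hne
    rcases Nat.lt_or_ge m n with h | h
    · apply (hTspec n).2
      show Tseq n ∈ L n
      rw [← hmn]
      exact (hmemL n (Tseq m)).2 ⟨m, h, rfl⟩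
    · have h' : n < m := by omega
      apply (hTspec m).2
      show Tseq m ∈ L m
      rw [hmn]
      exact (hmemL m (Tseq n)).2 ⟨n, h', rfl⟩
  · intro y
    obtain ⟨i, rfl⟩ := hg y
    refine ⟨i + 1, fun j hj => ?_⟩
    exact (hTspec j).1.2 i (by omega)
section Final
variable {P : Ultrafilter ℕ} (hP : ∀ s ∈ P, s.Infinite)
    (hpp : ∀ A : ℕ → Set ℕ, (∀ n, A n ∈ P) → ∃ B ∈ P, ∀ n, (B \ A n).Finite)

noncomputable def eqv : ℕ × ℕ ≃ ℕ := Denumerable.eqv (ℕ × ℕ)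

noncomputable def finalU (P : Ultrafilter ℕ) : Ultrafilter ℕ := (fub P).map eqv

lemma mem_finalU (s : Set ℕ) : s ∈ finalU P ↔ eqv ⁻¹' s ∈ fub P := Ultrafilter.mem_map

include hP in
lemma fub_no_empty : (∅ : Set ℕ) ∉ P := fun h => by simpa using hP ∅ h

include hP in
lemma cofinite_mem (m : ℕ) : {n : ℕ | m ≤ n} ∈ P := by
  by_contra h
  have h2 : {n : ℕ | m ≤ n}ᶜ ∈ P := Ultrafilter.compl_mem_iff_notMem.2 h
  have hsub : {n : ℕ | m ≤ n}ᶜ ⊆ Set.Iio m := by intro n hn; simpa using hn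
  exact (Set.finite_Iio m).not_infinite ((hP _ h2).mono hsub)

include hP in
lemma finalU_not_ppoint : ¬ IsPPoint (finalU P) := by
  intro h
  classical
  set A : ℕ → Set ℕ := fun m => eqv '' {p : ℕ × ℕ | m ≤ p.1} with hA
  have hmem : ∀ m, A m ∈ finalU P := by
    intro m
    rw [mem_finalU, Equiv.preimage_image, mem_fub]
    have : {n | colV {p : ℕ × ℕ | m ≤ p.1} n ∈ P} = {n | m ≤ n} := by
      ext n
      simp only [Set.mem_setOf_eq, colV]
      by_cases hn : m ≤ n
      · refine iff_of_true ?_ hn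
        have he : {k : ℕ | m ≤ n} = Set.univ := Set.eq_univ_of_forall (fun k => hn)
        rw [he]; exact Filter.univ_mem
      · refine iff_of_false ?_ hn
        have he : {k : ℕ | m ≤ n} = ∅ := by
          ext k; exact iff_false_intro hn
        rw [he]; exact fub_no_empty hP
    rw [this]
    exact cofinite_mem hP m
  obtain ⟨B, hB, hBfin⟩ := h A hmem
  rw [mem_finalU, mem_fub] at hB
  obtain ⟨n₀, hn₀⟩ := ((hP _ hB).nonempty)
  have hcol : colV (eqv ⁻¹' B) n₀ ∈ P := hn₀
  have hinj : Function.Injective (fun k => eqv (n₀, k)) :=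
    fun a b hab => by simpa using (eqv.injective hab)
  have hsub : (fun k => eqv (n₀, k)) '' (colV (eqv ⁻¹' B) n₀) ⊆ B \ A (n₀ + 1) := by
    rintro y ⟨k, hk, rfl⟩
    refine ⟨hk, ?_⟩
    rintro ⟨p, hp, hpe⟩
    have : p = (n₀, k) := eqv.injective hpe
    rw [this] at hp
    exact absurd hp (by simp)
  exact ((hP _ hcol).image hinj.injOn).mono hsub (hBfin (n₀+1))

end Final
section Neg
variable {P : Ultrafilter ℕ}

/-- The singleton map into finite sets of reals. -/
noncomputable def sing (x : ℝ) : {s : Set ℝ // s.Finite} := ⟨{x}, Set.finite_singleton x⟩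

lemma tukey_neg (hP : ∀ s ∈ P, s.Infinite)
    (hpp : ∀ A : ℕ → Set ℕ, (∀ n, A n ∈ P) → ∃ B ∈ P, ∀ n, (B \ A n).Finite) :
    ¬ TukeyLE (fun s t : {s : Set ℝ // s.Finite} => (s : Set ℝ) ⊆ (t : Set ℝ))
      (fun A B : {A : Set ℕ // A ∈ finalU P} => (B : Set ℕ) ⊆ (A : Set ℕ)) := by
  classical
  rintro ⟨f, hf⟩
  have hVA : ∀ x : ℝ, eqv ⁻¹' ((f (sing x) : {A // A ∈ finalU P}) : Set ℕ) ∈ fub P :=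
    fun x => (mem_finalU _).1 (f (sing x)).2
  set g : ℝ → Set (ℕ × ℕ) := fun x => (base_cofinal P (hVA x)).choose with hgdef
  have hg : ∀ x, g x ⊆ eqv ⁻¹' ((f (sing x) : {A // A ∈ finalU P}) : Set ℕ) ∧ Basish P (g x) :=
    fun x => (base_cofinal P (hVA x)).choose_spec
  -- the common contradiction
  have aux : ∀ I : Set ℝ, I.Infinite → ∀ b : Set (ℕ × ℕ), b ∈ fub P →
      (∀ x ∈ I, eqv '' b ⊆ ((f (sing x) : {A // A ∈ finalU P}) : Set ℕ)) → False := by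
    intro I hI b hb hsub
    have hS' : RelUnbounded (fun s t : {s : Set ℝ // s.Finite} => (s : Set ℝ) ⊆ (t : Set ℝ))
        (sing '' I) := by
      rintro ⟨⟨t, ht⟩, hbound⟩
      apply hI
      apply ht.subset
      intro x hx
      have := hbound (sing x) ⟨x, hx, rfl⟩
      exact this (Set.mem_singleton x)
    apply hf (sing '' I) hS'
    refine ⟨⟨eqv '' b, ?_⟩, ?_⟩
    · rw [mem_finalU, Equiv.preimage_image]
      exact hb
    · rintro y ⟨u, ⟨x, hx, rfl⟩, rfl⟩
      exact hsub x hx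
  by_cases hc : (Set.range g).Countable
  · have hfib : ¬ ∀ B ∈ Set.range g, {x | g x = B}.Countable := by
      intro hall
      apply Cardinal.not_countable_real
      have hsub : (Set.univ : Set ℝ) ⊆ ⋃ B ∈ Set.range g, {x | g x = B} :=
        fun x _ => Set.mem_biUnion (Set.mem_range_self x) rfl
      exact Set.Countable.mono hsub (Set.Countable.biUnion hc (fun B hB => hall B hB))
    push_neg at hfib
    obtain ⟨B, hBrange, hBunc⟩ := hfib
    obtain ⟨x₀, hx₀⟩ := hBrange
    refine aux {x | g x = B} (fun hfin => hBunc hfin.countable) B ?_ ?_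
    · rw [← hx₀]; exact (hg x₀).2.1
    · intro x hx
      have h1 : eqv '' B = eqv '' (g x) := by rw [hx]
      rw [h1]
      calc eqv '' (g x) ⊆ eqv '' (eqv ⁻¹' ((f (sing x) : {A // A ∈ finalU P}) : Set ℕ)) :=
        Set.image_mono (hg x).1
      _ = ((f (sing x) : {A // A ∈ finalU P}) : Set ℕ) := Set.image_preimage_eq _ eqv.surjective
  · obtain ⟨T, hTrange, Tseq, hTseqS, hTinj, hconv⟩ := condensation (Set.range g) hc
    have hT : ∀ j, Basish P (Tseq j) := by
      intro j
      obtain ⟨x, hx⟩ := hTseqS j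
      rw [← hx]; exact (hg x).2
    have hTinfB : Basish P T := by
      obtain ⟨x, hx⟩ := hTrange
      rw [← hx]; exact (hg x).2
    obtain ⟨c, hcmem, τ, hτ, hsubs⟩ := main_fusion hP hpp Tseq hT hTinfB hconv
    set xi : ℕ → ℝ := fun i => (hTseqS (τ i)).choose with hxidef
    have hxi : ∀ i, g (xi i) = Tseq (τ i) := fun i => (hTseqS (τ i)).choose_spec
    have hxiinj : Function.Injective xi := by
      intro i i' hii
      have : Tseq (τ i) = Tseq (τ i') := by rw [← hxi, ← hxi, hii]
      exact hτ.injective (hTinj this)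
    refine aux (Set.range xi) (Set.infinite_range_of_injective hxiinj) c hcmem ?_
    rintro x ⟨i, rfl⟩
    calc eqv '' c ⊆ eqv '' (Tseq (τ i)) := Set.image_mono (hsubs i)
    _ = eqv '' (g (xi i)) := by rw [hxi]
    _ ⊆ eqv '' (eqv ⁻¹' ((f (sing (xi i)) : {A // A ∈ finalU P}) : Set ℕ)) :=
      Set.image_mono (hg (xi i)).1
    _ = ((f (sing (xi i)) : {A // A ∈ finalU P}) : Set ℕ) :=
      Set.image_preimage_eq _ eqv.surjective
end Neg

end NPT

/-- `◊` implies there is a non-P-point ultrafilter `U` on `ω` such that `(U, ⊇)` is not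
Tukey equivalent to the finite sets of reals ordered by inclusion. -/
theorem diamond_implies_nonPPoint_not_tukey_finite_reals (hD : DiamondPrinciple) :
    ∃ U : Ultrafilter ℕ, ¬ IsPPoint U ∧
      ¬ TukeyEquiv
        (fun A B : {A : Set ℕ // A ∈ U} => (B : Set ℕ) ⊆ (A : Set ℕ))
        (fun s t : {s : Set ℝ // s.Finite} => (s : Set ℝ) ⊆ (t : Set ℝ)) := by
  classical
  obtain ⟨P, hP, hpp⟩ := NPT.exists_ppoint (NPT.diamond_inj hD)
  refine ⟨NPT.finalU P, NPT.finalU_not_ppoint hP, ?_⟩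
  rintro ⟨-, hsr⟩
  exact NPT.tukey_neg hP hpp hsr
end

section
/- The family AP of subsets of ℕ containing arbitrarily long arithmetic progressions is a superfilter: it is upward closed and whenever A ∪ B ∈ AP, then A ∈ AP or B ∈ AP. -/
open Combinatorics

/-- Finitary van der Waerden with an explicit bound, derived from Hales–Jewett. -/
lemma finVDW (m : ℕ) : ∃ N : ℕ, ∀ C : ℕ → Bool, ∃ a d c, 0 < d ∧
    (∀ i < m, a + i * d < N) ∧ ∀ i < m, C (a + i * d) = c := by
  classical
  obtain ⟨ι, _inst, hι⟩ := Line.exists_mono_in_high_dimension (Fin (m + 1)) Bool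
  refine ⟨Fintype.card ι * m + 1, fun C => ?_⟩
  obtain ⟨l, c, hl⟩ := hι fun v => C (∑ i, (v i : ℕ))
  set s : Finset ι := Finset.univ.filter (fun i => l.idxFun i = none) with hs
  have hspos : 0 < s.card := by
    refine Finset.card_pos.mpr ⟨l.proper.choose, ?_⟩
    rw [hs, Finset.mem_filter]
    exact ⟨Finset.mem_univ _, l.proper.choose_spec⟩
  set b : ℕ := ∑ i ∈ sᶜ, ((l.idxFun i).map (fun x : Fin (m + 1) => (x : ℕ))).getD 0 with hb
  have key : ∀ x : Fin (m + 1), ∑ i, ((l x i : Fin (m + 1)) : ℕ) = b + s.card * (x : ℕ) := by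
    intro x
    rw [← Finset.sum_add_sum_compl s, add_comm]
    congr 1
    · apply Finset.sum_congr rfl
      intro i hi
      rw [hs, Finset.compl_filter, Finset.mem_filter] at hi
      obtain ⟨y, hy⟩ := Option.ne_none_iff_exists.mp hi.right
      have : l x i = y := by
        show (l.idxFun i).getD x = y
        rw [← hy]; rfl
      simp [this, hb, ← hy]
    · have heach : ∀ i ∈ s, ((l x i : Fin (m + 1)) : ℕ) = (x : ℕ) := by
        intro i hi
        rw [hs, Finset.mem_filter] at hi
        have : l x i = x := by
          show (l.idxFun i).getD x = x
          rw [hi.right]; rfl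
        rw [this]
      rw [Finset.sum_congr rfl heach, Finset.sum_const, smul_eq_mul]
  have keybound : ∀ x : Fin (m + 1), b + s.card * (x : ℕ) ≤ Fintype.card ι * m := by
    intro x
    rw [← key x]
    calc ∑ i, ((l x i : Fin (m + 1)) : ℕ) ≤ ∑ _i : ι, m :=
          Finset.sum_le_sum fun i _ => Nat.lt_succ_iff.mp (l x i).isLt
      _ = Fintype.card ι * m := by simp [Finset.sum_const, Finset.card_univ, mul_comm]
  refine ⟨b, s.card, c, hspos, ?_, ?_⟩
  · intro i hi
    have hx : i < m + 1 := by omega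
    have := keybound ⟨i, hx⟩
    simp only [Fin.val_mk] at this
    have : b + i * s.card ≤ Fintype.card ι * m := by rw [mul_comm]; exact this
    omega
  · intro i hi
    have hx : i < m + 1 := by omega
    have h1 := hl ⟨i, hx⟩
    simp only at h1
    rw [key ⟨i, hx⟩] at h1
    rw [← h1, Fin.val_mk, mul_comm]

/-- The family of subsets of `ℕ` containing arbitrarily long arithmetic progressions. -/
def APFamily : Set (Set ℕ) :=
  {A : Set ℕ | ∀ k : ℕ, ∃ a d : ℕ, 0 < d ∧ ∀ i < k, a + i * d ∈ A}

/-- The family `AP` of sets containing arbitrarily long arithmetic progressions is a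
superfilter: it is upward closed and whenever `A ∪ B ∈ AP` then `A ∈ AP` or
`B ∈ AP` (the latter being equivalent to van der Waerden's theorem). -/
theorem APFamily_isSuperfilter :
    (∀ A ∈ APFamily, ∀ B : Set ℕ, A ⊆ B → B ∈ APFamily) ∧
      ∀ A B : Set ℕ, A ∪ B ∈ APFamily → A ∈ APFamily ∨ B ∈ APFamily := by
  classical
  constructor
  · intro A hA B hAB k
    obtain ⟨a, d, hd, h⟩ := hA k
    exact ⟨a, d, hd, fun i hi => hAB (h i hi)⟩
  · intro A B hAB
    by_cases hA : A ∈ APFamily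
    · exact Or.inl hA
    · right
      simp only [APFamily, Set.mem_setOf_eq, not_forall, not_exists, not_and] at hA
      obtain ⟨k₀, hk₀⟩ := hA
      intro k
      set m := max k k₀ with hm
      obtain ⟨N, hN⟩ := finVDW m
      obtain ⟨a, d, hd, hABN⟩ := hAB N
      set C : ℕ → Bool := fun i => if a + i * d ∈ A then true else false with hC
      obtain ⟨a', d', c, hd', hbound, hmono⟩ := hN C
      cases c with
      | true =>
        exfalso
        obtain ⟨i, hi, hiA⟩ := hk₀ (a + a' * d) (d' * d) (Nat.mul_pos hd' hd)
        have hC' := hmono i (lt_of_lt_of_le hi (le_max_right k k₀))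
        have : a + (a' + i * d') * d ∈ A := by
          by_contra h
          rw [hC] at hC'
          simp [h] at hC'
        apply hiA
        have : a + a' * d + i * (d' * d) = a + (a' + i * d') * d := by ring
        rw [this]
        exact ‹a + (a' + i * d') * d ∈ A›
      | false =>
        refine ⟨a + a' * d, d' * d, Nat.mul_pos hd' hd, fun i hi => ?_⟩
        have him : i < m := lt_of_lt_of_le hi (le_max_left k k₀)
        have hC' := hmono i him
        have hnotA : a + (a' + i * d') * d ∉ A := by
          intro h
          rw [hC] at hC'
          simp [h] at hC'
        have hmem : a + (a' + i * d') * d ∈ A ∪ B := hABN _ (hbound i him)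
        have : a + a' * d + i * (d' * d) = a + (a' + i * d') * d := by ring
        rw [this]
        exact hmem.resolve_left hnotA
end
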